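/- Let p_V be the viscous contact potential, λ ≥ 1, and U : X → X* symmetric positive-definite, and define the Yosida-type regularization p_V^{λ,U}(v,w) = inf_{η ∈ X*} { p_V(v,η) + λ‖v‖_U ‖w−η‖_{U^{−1}} }. Then p_V^{λ,U} is a regularized contact potential: it is continuous, finite, positively one-homogeneous in v, convex in w, satisfies max{R(v), ⟨w,v⟩} ≤ p_V^{λ,U}(v,w) ≤ p_V(v,w), and |p_V^{λ,U}(v,w₁) − p_V^{λ,U}(v,w₂)| ≤ L‖v‖‖w₁−w₂‖_* with L = λ√(‖U‖_op ‖U^{−1}‖_op). -/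

import Mathlib

/-!
Write `F_v(w, η) = p_V(v, η) + λ‖v‖_U‖w - η‖_{U⁻¹}`. Since `K*` is convex and `|·|_V`,
`‖·‖_{U⁻¹}` are seminorms, `F_v` is jointly convex in `(w, η)`, and an infimum over `η` of a
jointly convex function is convex in `w`. Taking `η = w` gives the upper bound `p_V`; the lower
bound comes from `⟨η, v⟩ ≤ p_V(v, η)` (Cauchy–Schwarz for `V`), `⟨w - η, v⟩ ≤ ‖w - η‖_{U⁻¹}‖v‖_U`
and `λ ≥ 1`. Changing `w` moves every `F_v(w, η)` by at most `λ‖v‖_U‖w₁ - w₂‖_{U⁻¹}`, which gives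
the Lipschitz bound, so joint continuity reduces to continuity in `v`. As an infimum of continuous
functions of `v` the regularization is upper semicontinuous; it is lower semicontinuous because
`p_V^{λ,U}(v, w) - R(v)` depends on `v` only through `|v|_V` and `‖v‖_U`, monotonically and
positively homogeneously.
-/

open Classical

/-- `K* = ∂R(0)`. -/
def Kstar {X : Type*} [NormedAddCommGroup X] [NormedSpace ℝ X]
    (R : X → ℝ) : Set (X →L[ℝ] ℝ) :=
  {w | ∀ z, w z ≤ R z}

/-- The effective domain `K* + (ker V)^⊥` (for symmetric `V` in finite dimension
the annihilator `(ker V)^⊥` is the range of `V`). -/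
def pVdom {X : Type*} [NormedAddCommGroup X] [NormedSpace ℝ X]
    (R : X → ℝ) (V : X →L[ℝ] X →L[ℝ] ℝ) : Set (X →L[ℝ] ℝ) :=
  {w | ∃ x : X, w - V x ∈ Kstar R}

/-- `inf { |w−z|_{V'} : z ∈ K*, w−z ∈ (ker V)^⊥ }`, using `|Vx|_{V'} = ⟨Vx,x⟩^{1/2}`. -/
noncomputable def distVp {X : Type*} [NormedAddCommGroup X] [NormedSpace ℝ X]
    (R : X → ℝ) (V : X →L[ℝ] X →L[ℝ] ℝ) (w : X →L[ℝ] ℝ) : ℝ :=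
  sInf {s : ℝ | ∃ x : X, w - V x ∈ Kstar R ∧ s = Real.sqrt (V x x)}

/-- The finite part of the viscous contact potential. -/
noncomputable def pVreal {X : Type*} [NormedAddCommGroup X] [NormedSpace ℝ X]
    (R : X → ℝ) (V : X →L[ℝ] X →L[ℝ] ℝ) (v : X) (w : X →L[ℝ] ℝ) : ℝ :=
  R v + Real.sqrt (V v v) * distVp R V w

/-- The viscous contact potential (extended-real-valued). -/
noncomputable def pV {X : Type*} [NormedAddCommGroup X] [NormedSpace ℝ X]
    (R : X → ℝ) (V : X →L[ℝ] X →L[ℝ] ℝ) (v : X) (w : X →L[ℝ] ℝ) : EReal :=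
  if w ∈ pVdom R V then ((pVreal R V v w : ℝ) : EReal) else ⊤

/-- The Yosida-type regularization
`p_V^{λ,U}(v,w) = inf_η { p_V(v,η) + λ‖v‖_U‖w−η‖_{U⁻¹} }`; the infimum is
effectively over `η` in the domain of `p_V(v,·)`. -/
noncomputable def yosida {X : Type*} [NormedAddCommGroup X] [NormedSpace ℝ X]
    (R : X → ℝ) (V : X →L[ℝ] X →L[ℝ] ℝ) (U : X ≃L[ℝ] (X →L[ℝ] ℝ))
    (lam : ℝ) (v : X) (w : X →L[ℝ] ℝ) : ℝ :=
  sInf {s : ℝ | ∃ η ∈ pVdom R V,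
    s = pVreal R V v η + lam * Real.sqrt (U v v) * Real.sqrt ((w - η) (U.symm (w - η)))}

open Set Filter Topology

section PsdForm

variable {E : Type*} [NormedAddCommGroup E] [NormedSpace ℝ E] (B : E →L[ℝ] E →L[ℝ] ℝ)

theorem ContinuousLinearMap.apply_le_sqrt_mul_sqrt (hsymm : ∀ x y, B x y = B y x)
    (hnonneg : ∀ x, 0 ≤ B x x) (x y : E) : B x y ≤ √(B x x) * √(B y y) := by
  have hcs := B.toBilinForm.apply_sq_le_of_symm hnonneg ⟨fun x y => hsymm x y⟩ x y
  rw [← Real.sqrt_mul (hnonneg x)]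
  exact (le_abs_self _).trans (Real.abs_le_sqrt hcs)

theorem ContinuousLinearMap.sqrt_apply_add_le (hsymm : ∀ x y, B x y = B y x)
    (hnonneg : ∀ x, 0 ≤ B x x) (x y : E) :
    √(B (x + y) (x + y)) ≤ √(B x x) + √(B y y) := by
  have hcs := B.apply_le_sqrt_mul_sqrt hsymm hnonneg x y
  have hexp : B (x + y) (x + y) = B x x + 2 * B x y + B y y := by
    simp only [map_add, add_apply, hsymm y x]
    ring
  rw [Real.sqrt_le_iff, hexp]
  refine ⟨by positivity, ?_⟩
  nlinarith [Real.sq_sqrt (hnonneg x), Real.sq_sqrt (hnonneg y)]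

theorem ContinuousLinearMap.sqrt_apply_smul (c : ℝ) (x : E) :
    √(B (c • x) (c • x)) = |c| * √(B x x) := by
  have h : B (c • x) (c • x) = c ^ 2 * B x x := by
    simp only [map_smul, smul_apply, smul_eq_mul]
    ring
  rw [h, Real.sqrt_mul (sq_nonneg c), Real.sqrt_sq_eq_abs]

theorem ContinuousLinearMap.convexOn_sqrt_apply (hsymm : ∀ x y, B x y = B y x)
    (hnonneg : ∀ x, 0 ≤ B x x) : ConvexOn ℝ univ fun x => √(B x x) := by
  refine ⟨convex_univ, fun x _ y _ a b ha hb _ => ?_⟩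
  calc √(B (a • x + b • y) (a • x + b • y))
      ≤ √(B (a • x) (a • x)) + √(B (b • y) (b • y)) := B.sqrt_apply_add_le hsymm hnonneg _ _
    _ = a • √(B x x) + b • √(B y y) := by
      rw [B.sqrt_apply_smul, B.sqrt_apply_smul, abs_of_nonneg ha, abs_of_nonneg hb,
        smul_eq_mul, smul_eq_mul]

theorem ContinuousLinearMap.sqrt_apply_self_le (x : E) : √(B x x) ≤ √‖B‖ * ‖x‖ := by
  have h : B x x ≤ ‖B‖ * ‖x‖ ^ 2 :=
    calc B x x ≤ ‖B x x‖ := Real.le_norm_self _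
      _ ≤ ‖B‖ * ‖x‖ * ‖x‖ := B.le_opNorm₂ x x
      _ = ‖B‖ * ‖x‖ ^ 2 := by ring
  calc √(B x x) ≤ √(‖B‖ * ‖x‖ ^ 2) := Real.sqrt_le_sqrt h
    _ = √‖B‖ * ‖x‖ := by rw [Real.sqrt_mul (norm_nonneg B), Real.sqrt_sq (norm_nonneg x)]

theorem ContinuousLinearMap.sqrt_dual_apply_le (T : (E →L[ℝ] ℝ) →L[ℝ] E) (u : E →L[ℝ] ℝ) :
    √(u (T u)) ≤ √‖T‖ * ‖u‖ := by
  have h : u (T u) ≤ ‖T‖ * ‖u‖ ^ 2 :=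
    calc u (T u) ≤ ‖u (T u)‖ := Real.le_norm_self _
      _ ≤ ‖u‖ * ‖T u‖ := u.le_opNorm _
      _ ≤ ‖u‖ * (‖T‖ * ‖u‖) := by gcongr; exact T.le_opNorm u
      _ = ‖T‖ * ‖u‖ ^ 2 := by ring
  calc √(u (T u)) ≤ √(‖T‖ * ‖u‖ ^ 2) := Real.sqrt_le_sqrt h
    _ = √‖T‖ * ‖u‖ := by rw [Real.sqrt_mul (norm_nonneg T), Real.sqrt_sq (norm_nonneg u)]

end PsdForm

section DualForm

variable {E : Type*} [NormedAddCommGroup E] [NormedSpace ℝ E] (U : E ≃L[ℝ] (E →L[ℝ] ℝ))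

theorem ContinuousLinearEquiv.apply_symm_self (u : E →L[ℝ] ℝ) :
    u (U.symm u) = U (U.symm u) (U.symm u) := by
  rw [U.apply_symm_apply]

theorem ContinuousLinearEquiv.apply_le_sqrt_mul_sqrt (hsymm : ∀ x y, U x y = U y x)
    (hnonneg : ∀ x, 0 ≤ U x x) (u : E →L[ℝ] ℝ) (v : E) :
    u v ≤ √(u (U.symm u)) * √(U v v) := by
  rw [U.apply_symm_self]
  conv_lhs => rw [← U.apply_symm_apply u]
  exact (U : E →L[ℝ] E →L[ℝ] ℝ).apply_le_sqrt_mul_sqrt hsymm hnonneg _ _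

theorem ContinuousLinearEquiv.sqrt_symm_apply_add_le (hsymm : ∀ x y, U x y = U y x)
    (hnonneg : ∀ x, 0 ≤ U x x) (a b : E →L[ℝ] ℝ) :
    √((a + b) (U.symm (a + b))) ≤ √(a (U.symm a)) + √(b (U.symm b)) := by
  simp only [U.apply_symm_self]
  rw [map_add]
  exact (U : E →L[ℝ] E →L[ℝ] ℝ).sqrt_apply_add_le hsymm hnonneg _ _

theorem ContinuousLinearEquiv.convexOn_sqrt_symm_apply (hsymm : ∀ x y, U x y = U y x)
    (hnonneg : ∀ x, 0 ≤ U x x) :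
    ConvexOn ℝ univ fun u : E →L[ℝ] ℝ => √(u (U.symm u)) := by
  have h := ((U : E →L[ℝ] E →L[ℝ] ℝ).convexOn_sqrt_apply hsymm hnonneg).comp_linearMap
    (U.symm : (E →L[ℝ] ℝ) →L[ℝ] E).toLinearMap
  simpa [Function.comp_def, U.apply_symm_self] using h

theorem ContinuousLinearEquiv.sqrt_apply_self_mul_sqrt_symm_le (v : E) (u : E →L[ℝ] ℝ) :
    √(U v v) * √(u (U.symm u)) ≤
      √(‖U.toContinuousLinearMap‖ * ‖U.symm.toContinuousLinearMap‖) * ‖v‖ * ‖u‖ := by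
  rw [Real.sqrt_mul (norm_nonneg U.toContinuousLinearMap)]
  calc √(U v v) * √(u (U.symm u))
      ≤ (√‖U.toContinuousLinearMap‖ * ‖v‖) * (√‖U.symm.toContinuousLinearMap‖ * ‖u‖) :=
        mul_le_mul (U.toContinuousLinearMap.sqrt_apply_self_le v)
          (U.symm.toContinuousLinearMap.sqrt_dual_apply_le u) (Real.sqrt_nonneg _)
          (by positivity)
    _ = _ := by ring

end DualForm

theorem sInf_setOf_exists_and_eq {ι : Type*} (p : ι → Prop) (g : ι → ℝ) :
    sInf {s | ∃ i, p i ∧ s = g i} = ⨅ i : {i // p i}, g i := by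
  congr 1
  ext s
  simp [eq_comm]

theorem ConvexOn.iInf_fiber {E F : Type*} [AddCommGroup E] [Module ℝ E] [AddCommGroup F]
    [Module ℝ F] {C : Set (E × F)} {f : E × F → ℝ} (hf : ConvexOn ℝ C f)
    (hbdd : BddBelow (f '' C)) :
    ConvexOn ℝ (Prod.fst '' C) fun w => ⨅ z : {z // (w, z) ∈ C}, f (w, z) := by
  have hbdd_fiber (w : E) : BddBelow (range fun z : {z // (w, z) ∈ C} => f (w, z)) :=
    hbdd.mono (by rintro _ ⟨⟨z, hz⟩, rfl⟩; exact ⟨_, hz, rfl⟩)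
  refine ⟨hf.1.linear_image (LinearMap.fst ℝ E F), ?_⟩
  rintro _ ⟨⟨w₁, z₁⟩, h₁, rfl⟩ _ ⟨⟨w₂, z₂⟩, h₂, rfl⟩ a b ha hb hab
  have : Nonempty {z // (w₁, z) ∈ C} := ⟨⟨z₁, h₁⟩⟩
  have : Nonempty {z // (w₂, z) ∈ C} := ⟨⟨z₂, h₂⟩⟩
  simp only [smul_eq_mul, Real.mul_iInf_of_nonneg ha, Real.mul_iInf_of_nonneg hb]
  refine le_ciInf_add_ciInf fun y₁ y₂ => ?_
  have hmem := hf.1 y₁.2 y₂.2 ha hb hab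
  calc _ ≤ f (a • w₁ + b • w₂, a • y₁.1 + b • y₂.1) := ciInf_le (hbdd_fiber _) ⟨_, hmem⟩
    _ ≤ a * f (w₁, y₁) + b * f (w₂, y₂) := hf.2 y₁.2 y₂.2 ha hb hab

theorem lowerSemicontinuousAt_of_mul_le {α : Type*} [TopologicalSpace α] {g a b : α → ℝ}
    {x₀ : α} (ha : ContinuousAt a x₀) (hb : ContinuousAt b x₀) (ha₀ : ∀ x, 0 ≤ a x)
    (hb₀ : ∀ x, 0 ≤ b x)
    (hg : ∀ t x, 0 ≤ t → t * a x₀ ≤ a x → t * b x₀ ≤ b x → t * g x₀ ≤ g x) :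
    LowerSemicontinuousAt g x₀ := by
  have eventually_mul_le {c : α → ℝ} (hc : ContinuousAt c x₀) (hc₀ : ∀ x, 0 ≤ c x) {t : ℝ}
      (ht : t < 1) : ∀ᶠ x in 𝓝 x₀, t * c x₀ ≤ c x := by
    rcases (hc₀ x₀).eq_or_lt with h | h
    · exact Eventually.of_forall fun x => by rw [← h, mul_zero]; exact hc₀ x
    · exact (hc.eventually (lt_mem_nhds (by nlinarith))).mono fun _ => le_of_lt
  intro y hy
  have hnear : ∀ᶠ t in 𝓝[<] (1 : ℝ), t ∈ Ioo 0 1 ∧ y < t * g x₀ := by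
    have hcont : Tendsto (fun t : ℝ => t * g x₀) (𝓝[<] 1) (𝓝 (1 * g x₀)) :=
      ((continuous_id.mul continuous_const).tendsto 1).mono_left nhdsWithin_le_nhds
    rw [one_mul] at hcont
    exact Eventually.and (Ioo_mem_nhdsLT zero_lt_one) (hcont.eventually (lt_mem_nhds hy))
  obtain ⟨t, ⟨ht₀, ht₁⟩, hyt⟩ := hnear.exists
  filter_upwards [eventually_mul_le ha ha₀ ht₁, eventually_mul_le hb hb₀ ht₁] with x hax hbx
  exact hyt.trans_le (hg t x ht₀.le hax hbx)

theorem continuous_uncurry_of_abs_sub_le {α F : Type*} [TopologicalSpace α]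
    [SeminormedAddCommGroup F] {f : α → F → ℝ} {K : α → ℝ} (hK : Continuous K)
    (hf : ∀ w, Continuous fun v => f v w)
    (hlip : ∀ v w₁ w₂, |f v w₁ - f v w₂| ≤ K v * ‖w₁ - w₂‖) :
    Continuous fun p : α × F => f p.1 p.2 := by
  refine continuous_iff_continuousAt.2 fun ⟨v₀, w₀⟩ => ?_
  have hbound : Tendsto (fun p : α × F => K p.1 * ‖p.2 - w₀‖) (𝓝 (v₀, w₀)) (𝓝 0) := by
    have hcont : Continuous fun p : α × F => K p.1 * ‖p.2 - w₀‖ := by fun_prop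
    simpa using hcont.tendsto (v₀, w₀)
  have hdiff : Tendsto (fun p : α × F => f p.1 p.2 - f p.1 w₀) (𝓝 (v₀, w₀)) (𝓝 0) :=
    squeeze_zero_norm (fun p => (Real.norm_eq_abs _).le.trans (hlip p.1 p.2 w₀)) hbound
  have hleft := ((hf w₀).comp continuous_fst).tendsto (v₀, w₀)
  simpa [ContinuousAt] using hdiff.add hleft

section Yosida

variable {X : Type*} [NormedAddCommGroup X] [NormedSpace ℝ X] {R : X → ℝ}
  {V : X →L[ℝ] X →L[ℝ] ℝ} {U : X ≃L[ℝ] (X →L[ℝ] ℝ)} {lam : ℝ}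

theorem convex_Kstar (R : X → ℝ) : Convex ℝ (Kstar R) := by
  intro u hu w hw a b ha hb hab z
  calc (a • u + b • w) z = a * u z + b * w z := rfl
    _ ≤ a * R z + b * R z := by gcongr; exacts [hu z, hw z]
    _ = R z := by rw [← add_mul, hab, one_mul]

theorem zero_mem_pVdom (hR : ∀ v, 0 ≤ R v) : (0 : X →L[ℝ] ℝ) ∈ pVdom R V :=
  ⟨0, by simpa [Kstar] using hR⟩

theorem distVp_eq_iInf (w : X →L[ℝ] ℝ) :
    distVp R V w = ⨅ x : {x // w - V x ∈ Kstar R}, √(V x x) :=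
  sInf_setOf_exists_and_eq _ _

theorem distVp_nonneg (w : X →L[ℝ] ℝ) : 0 ≤ distVp R V w := by
  rw [distVp_eq_iInf]
  exact Real.iInf_nonneg fun _ => Real.sqrt_nonneg _

theorem convexOn_distVp (hVsym : ∀ x y, V x y = V y x) (hVpsd : ∀ x, 0 ≤ V x x) :
    ConvexOn ℝ (pVdom R V) (distVp R V) := by
  let C : Set ((X →L[ℝ] ℝ) × X) := {p | p.1 - V p.2 ∈ Kstar R}
  have hC : Convex ℝ C := (convex_Kstar R).linear_preimage
    (LinearMap.fst ℝ (X →L[ℝ] ℝ) X - (V : X →ₗ[ℝ] X →L[ℝ] ℝ).comp (LinearMap.snd ℝ (X →L[ℝ] ℝ) X))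
  have hf : ConvexOn ℝ C fun p => √(V p.2 p.2) :=
    ((V.convexOn_sqrt_apply hVsym hVpsd).comp_linearMap (LinearMap.snd ℝ _ _)).subset
      (subset_univ _) hC
  have hdom : Prod.fst '' C = pVdom R V := by
    ext w
    simp [C, pVdom]
  have h := hf.iInf_fiber ⟨0, by rintro _ ⟨p, -, rfl⟩; exact Real.sqrt_nonneg _⟩
  rw [hdom] at h
  have e : distVp R V = fun w => ⨅ x : {x // (w, x) ∈ C}, √(V x x) := funext distVp_eq_iInf
  rwa [e]

theorem convexOn_pVreal (hVsym : ∀ x y, V x y = V y x) (hVpsd : ∀ x, 0 ≤ V x x) (v : X) :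
    ConvexOn ℝ (pVdom R V) (pVreal R V v) := by
  refine (((convexOn_distVp hVsym hVpsd).smul (Real.sqrt_nonneg (V v v))).add_const (R v)).congr
    fun η _ => ?_
  simp only [pVreal, smul_eq_mul, Pi.add_apply]
  ring

theorem le_pVreal (v : X) (η : X →L[ℝ] ℝ) : R v ≤ pVreal R V v η :=
  le_add_of_nonneg_right (mul_nonneg (Real.sqrt_nonneg _) (distVp_nonneg η))

theorem pVreal_smul (hRhom : ∀ c : ℝ, 0 ≤ c → ∀ v, R (c • v) = c * R v) {c : ℝ} (hc : 0 ≤ c)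
    (v : X) (η : X →L[ℝ] ℝ) : pVreal R V (c • v) η = c * pVreal R V v η := by
  rw [pVreal, pVreal, hRhom c hc, V.sqrt_apply_smul, abs_of_nonneg hc]
  ring

theorem apply_le_pVreal (hVsym : ∀ x y, V x y = V y x) (hVpsd : ∀ x, 0 ≤ V x x) (v : X)
    {η : X →L[ℝ] ℝ} (hη : η ∈ pVdom R V) : η v ≤ pVreal R V v η := by
  obtain ⟨x₀, hx₀⟩ := hη
  have : Nonempty {x // η - V x ∈ Kstar R} := ⟨⟨x₀, hx₀⟩⟩
  have key : η v - R v ≤ √(V v v) * distVp R V η := by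
    rw [distVp_eq_iInf, Real.mul_iInf_of_nonneg (Real.sqrt_nonneg _)]
    refine le_ciInf fun ⟨x, hx⟩ => ?_
    have hK : η v - V x v ≤ R v := hx v
    have hcs := V.apply_le_sqrt_mul_sqrt hVsym hVpsd x v
    linarith [mul_comm √(V x x) √(V v v)]
  rw [pVreal]
  linarith

theorem yosida_eq_iInf (v : X) (w : X →L[ℝ] ℝ) :
    yosida R V U lam v w =
      ⨅ η : pVdom R V, pVreal R V v η + lam * √(U v v) * √((w - η) (U.symm (w - η))) :=
  sInf_setOf_exists_and_eq _ _

theorem bddBelow_range_yosida (hR : ∀ v, 0 ≤ R v) (hlam : 0 ≤ lam)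
    (v : X) (w : X →L[ℝ] ℝ) :
    BddBelow (range fun η : pVdom R V =>
      pVreal R V v η + lam * √(U v v) * √((w - η) (U.symm (w - η)))) := by
  refine ⟨0, ?_⟩
  rintro _ ⟨η, rfl⟩
  have := (hR v).trans (le_pVreal (V := V) v η)
  positivity

theorem yosida_le (hR : ∀ v, 0 ≤ R v) (hlam : 0 ≤ lam) (v : X)
    (w : X →L[ℝ] ℝ) {η : X →L[ℝ] ℝ} (hη : η ∈ pVdom R V) :
    yosida R V U lam v w ≤ pVreal R V v η + lam * √(U v v) * √((w - η) (U.symm (w - η))) := by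
  rw [yosida_eq_iInf]
  exact ciInf_le (bddBelow_range_yosida hR hlam v w) ⟨η, hη⟩

theorem le_yosida (hR : ∀ v, 0 ≤ R v) {v : X} {w : X →L[ℝ] ℝ} {a : ℝ}
    (h : ∀ η ∈ pVdom R V, a ≤ pVreal R V v η + lam * √(U v v) * √((w - η) (U.symm (w - η)))) :
    a ≤ yosida R V U lam v w := by
  have : Nonempty (pVdom R V) := ⟨⟨0, zero_mem_pVdom hR⟩⟩
  rw [yosida_eq_iInf]
  exact le_ciInf fun η => h η η.2

theorem yosida_le_pV (hR : ∀ v, 0 ≤ R v) (hlam : 0 ≤ lam) (v : X)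
    (w : X →L[ℝ] ℝ) : ((yosida R V U lam v w : ℝ) : EReal) ≤ pV R V v w := by
  by_cases hw : w ∈ pVdom R V
  · rw [pV, if_pos hw, EReal.coe_le_coe_iff]
    simpa using yosida_le hR hlam v w hw
  · rw [pV, if_neg hw]
    exact le_top

theorem max_le_yosida (hR : ∀ v, 0 ≤ R v) (hVsym : ∀ x y, V x y = V y x)
    (hVpsd : ∀ x, 0 ≤ V x x) (hUsym : ∀ x y, U x y = U y x) (hU : ∀ x, 0 ≤ U x x)
    (hlam : 1 ≤ lam) (v : X) (w : X →L[ℝ] ℝ) : max (R v) (w v) ≤ yosida R V U lam v w := by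
  refine le_yosida hR fun η hη => ?_
  have hN : 0 ≤ √(U v v) * √((w - η) (U.symm (w - η))) := by positivity
  have hpenalty : √(U v v) * √((w - η) (U.symm (w - η))) ≤
      lam * √(U v v) * √((w - η) (U.symm (w - η))) := by
    rw [mul_assoc]
    exact le_mul_of_one_le_left hN hlam
  refine max_le ?_ ?_
  · linarith [le_pVreal (R := R) (V := V) v η]
  · have hpair := U.apply_le_sqrt_mul_sqrt hUsym hU (w - η) v
    have hsplit : w v = η v + (w - η) v := by simp
    linarith [apply_le_pVreal hVsym hVpsd v hη]

theorem yosida_smul (hRhom : ∀ c : ℝ, 0 ≤ c → ∀ v, R (c • v) = c * R v) {c : ℝ} (hc : 0 ≤ c)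
    (v : X) (w : X →L[ℝ] ℝ) : yosida R V U lam (c • v) w = c * yosida R V U lam v w := by
  have hU : √(U (c • v) (c • v)) = c * √(U v v) := by
    simpa [abs_of_nonneg hc] using (U : X →L[ℝ] X →L[ℝ] ℝ).sqrt_apply_smul c v
  simp only [yosida_eq_iInf, Real.mul_iInf_of_nonneg hc, pVreal_smul hRhom hc, hU]
  congr 1
  ext η
  ring

theorem convexOn_yosida (hR : ∀ v, 0 ≤ R v) (hVsym : ∀ x y, V x y = V y x)
    (hVpsd : ∀ x, 0 ≤ V x x) (hUsym : ∀ x y, U x y = U y x) (hU : ∀ x, 0 ≤ U x x)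
    (hlam : 0 ≤ lam) (v : X) : ConvexOn ℝ univ (yosida R V U lam v) := by
  let C : Set ((X →L[ℝ] ℝ) × (X →L[ℝ] ℝ)) := Prod.snd ⁻¹' pVdom R V
  have hC : Convex ℝ C := (convexOn_distVp hVsym hVpsd).1.linear_preimage (LinearMap.snd ℝ _ _)
  have hpV : ConvexOn ℝ C fun p => pVreal R V v p.2 :=
    (convexOn_pVreal hVsym hVpsd v).comp_linearMap (LinearMap.snd ℝ _ _)
  have hdist : ConvexOn ℝ C fun p => √((p.1 - p.2) (U.symm (p.1 - p.2))) :=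
    ((U.convexOn_sqrt_symm_apply hUsym hU).comp_linearMap
      (LinearMap.fst ℝ (X →L[ℝ] ℝ) (X →L[ℝ] ℝ) - LinearMap.snd ℝ (X →L[ℝ] ℝ) (X →L[ℝ] ℝ))).subset
      (subset_univ _) hC
  have hf := hpV.add (hdist.smul (mul_nonneg hlam (Real.sqrt_nonneg (U v v))))
  have hbdd : BddBelow ((fun p => pVreal R V v p.2 + (lam * √(U v v)) •
      √((p.1 - p.2) (U.symm (p.1 - p.2)))) '' C) := by
    refine ⟨0, ?_⟩
    rintro _ ⟨p, -, rfl⟩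
    have := (hR v).trans (le_pVreal (V := V) v p.2)
    simp only [smul_eq_mul]
    positivity
  have hdom : Prod.fst '' C = univ :=
    eq_univ_of_forall fun w => ⟨(w, 0), zero_mem_pVdom hR, rfl⟩
  have h := hf.iInf_fiber hbdd
  rw [hdom] at h
  have e : yosida R V U lam v = fun w => ⨅ η : {η // (w, η) ∈ C},
      pVreal R V v η + (lam * √(U v v)) • √((w - η) (U.symm (w - η))) := by
    funext w
    simp only [yosida_eq_iInf, smul_eq_mul, mul_assoc]
    rfl
  rwa [e]

theorem yosida_le_add (hR : ∀ v, 0 ≤ R v) (hUsym : ∀ x y, U x y = U y x)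
    (hU : ∀ x, 0 ≤ U x x) (hlam : 0 ≤ lam) (v : X) (w₁ w₂ : X →L[ℝ] ℝ) :
    yosida R V U lam v w₁ ≤ yosida R V U lam v w₂ +
      lam * √(‖U.toContinuousLinearMap‖ * ‖U.symm.toContinuousLinearMap‖) * ‖v‖ * ‖w₁ - w₂‖ := by
  rw [← sub_le_iff_le_add]
  refine le_yosida hR fun η hη => ?_
  have htri := U.sqrt_symm_apply_add_le hUsym hU (w₂ - η) (w₁ - w₂)
  rw [sub_add_sub_cancel'] at htri
  have hbound := mul_le_mul_of_nonneg_left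
    (U.sqrt_apply_self_mul_sqrt_symm_le v (w₁ - w₂)) hlam
  have hmono := mul_le_mul_of_nonneg_left htri (mul_nonneg hlam (Real.sqrt_nonneg (U v v)))
  have := yosida_le (U := U) hR hlam v w₁ hη
  linarith

theorem abs_yosida_sub_le (hR : ∀ v, 0 ≤ R v) (hUsym : ∀ x y, U x y = U y x)
    (hU : ∀ x, 0 ≤ U x x) (hlam : 0 ≤ lam) (v : X) (w₁ w₂ : X →L[ℝ] ℝ) :
    |yosida R V U lam v w₁ - yosida R V U lam v w₂| ≤
      lam * √(‖U.toContinuousLinearMap‖ * ‖U.symm.toContinuousLinearMap‖) * ‖v‖ * ‖w₁ - w₂‖ := by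
  rw [abs_sub_le_iff]
  constructor
  · linarith [yosida_le_add (V := V) hR hUsym hU hlam v w₁ w₂]
  · have h := yosida_le_add (V := V) hR hUsym hU hlam v w₂ w₁
    rw [norm_sub_rev] at h
    linarith

theorem mul_yosida_sub_le (hR : ∀ v, 0 ≤ R v) (hlam : 0 ≤ lam) (w : X →L[ℝ] ℝ) {t : ℝ}
    {v₀ v : X} (ht : 0 ≤ t) (hV : t * √(V v₀ v₀) ≤ √(V v v)) (hU : t * √(U v₀ v₀) ≤ √(U v v)) :
    t * (yosida R V U lam v₀ w - R v₀) ≤ yosida R V U lam v w - R v := by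
  rw [le_sub_iff_add_le']
  refine le_yosida hR fun η hη => ?_
  have hη₀ := yosida_le (U := U) hR hlam v₀ w hη
  set d := distVp R V η
  set N := √((w - η) (U.symm (w - η)))
  have hd : 0 ≤ d := distVp_nonneg η
  have hN : 0 ≤ N := Real.sqrt_nonneg _
  rw [pVreal] at hη₀ ⊢
  calc R v + t * (yosida R V U lam v₀ w - R v₀)
      ≤ R v + t * (√(V v₀ v₀) * d + lam * √(U v₀ v₀) * N) := by gcongr; linarith
    _ = R v + (t * √(V v₀ v₀)) * d + lam * (t * √(U v₀ v₀)) * N := by ring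
    _ ≤ R v + √(V v v) * d + lam * √(U v v) * N := by gcongr

theorem continuous_yosida_left (hRcont : Continuous R) (hR : ∀ v, 0 ≤ R v) (hlam : 0 ≤ lam)
    (w : X →L[ℝ] ℝ) : Continuous fun v => yosida R V U lam v w := by
  refine continuous_iff_continuousAt.2 fun v₀ =>
    continuousAt_iff_lower_upperSemicontinuousAt.2 ⟨?_, ?_⟩
  · have hg : LowerSemicontinuousAt (fun v => yosida R V U lam v w - R v) v₀ :=
      lowerSemicontinuousAt_of_mul_le (a := fun v => √(V v v)) (b := fun v => √(U v v))
        (by fun_prop) (by fun_prop) (fun _ => Real.sqrt_nonneg _) (fun _ => Real.sqrt_nonneg _)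
        fun t v ht hV hU => mul_yosida_sub_le hR hlam w ht hV hU
    simpa using hg.add hRcont.continuousAt.lowerSemicontinuousAt
  · simp only [yosida_eq_iInf]
    refine upperSemicontinuous_ciInf (bddBelow_range_yosida hR hlam · w) (fun η => ?_) v₀
    exact Continuous.upperSemicontinuous (by unfold pVreal; fun_prop)

end Yosida

theorem yosida_is_RCP_general {X : Type*} [NormedAddCommGroup X] [NormedSpace ℝ X]
    [FiniteDimensional ℝ X] (R : X → ℝ)
    (hRnonneg : ∀ v, 0 ≤ R v)
    (hRconv : ConvexOn ℝ Set.univ R)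
    (hRhom : ∀ c : ℝ, 0 ≤ c → ∀ v, R (c • v) = c * R v)
    (V : X →L[ℝ] X →L[ℝ] ℝ)
    (hVsym : ∀ x y, V x y = V y x)
    (hVpsd : ∀ x, 0 ≤ V x x)
    (U : X ≃L[ℝ] (X →L[ℝ] ℝ))
    (hUsym : ∀ x y, U x y = U y x)
    (hUpos : ∀ x : X, x ≠ 0 → 0 < U x x)
    (lam : ℝ) (hlam : 1 ≤ lam) :
    Continuous (fun q : X × (X →L[ℝ] ℝ) => yosida R V U lam q.1 q.2)
    ∧ (∀ c : ℝ, 0 ≤ c → ∀ (v : X) (w : X →L[ℝ] ℝ),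
        yosida R V U lam (c • v) w = c * yosida R V U lam v w)
    ∧ (∀ (v : X) (w₁ w₂ : X →L[ℝ] ℝ) (θ : ℝ), 0 ≤ θ → θ ≤ 1 →
        yosida R V U lam v (θ • w₁ + (1 - θ) • w₂) ≤
          θ * yosida R V U lam v w₁ + (1 - θ) * yosida R V U lam v w₂)
    ∧ (∀ (v : X) (w : X →L[ℝ] ℝ), max (R v) (w v) ≤ yosida R V U lam v w)
    ∧ (∀ (v : X) (w : X →L[ℝ] ℝ), ((yosida R V U lam v w : ℝ) : EReal) ≤ pV R V v w)
    ∧ (∀ (v : X) (w₁ w₂ : X →L[ℝ] ℝ),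
        |yosida R V U lam v w₁ - yosida R V U lam v w₂| ≤
          lam * Real.sqrt (‖U.toContinuousLinearMap‖ * ‖U.symm.toContinuousLinearMap‖)
            * ‖v‖ * ‖w₁ - w₂‖) := by
  have hlam₀ : 0 ≤ lam := zero_le_one.trans hlam
  have hU : ∀ x, 0 ≤ U x x := fun x => by
    rcases eq_or_ne x 0 with rfl | hx
    · simp
    · exact (hUpos x hx).le
  have hRcont : Continuous R := continuousOn_univ.1 (hRconv.continuousOn isOpen_univ)
  have hlip := abs_yosida_sub_le (V := V) hRnonneg hUsym hU hlam₀
  refine ⟨?_, fun c hc => yosida_smul hRhom hc, fun v w₁ w₂ θ hθ₀ hθ₁ => ?_,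
    max_le_yosida hRnonneg hVsym hVpsd hUsym hU hlam, yosida_le_pV hRnonneg hlam₀, hlip⟩
  · exact continuous_uncurry_of_abs_sub_le (by fun_prop)
      (continuous_yosida_left hRcont hRnonneg hlam₀) hlip
  · simpa only [smul_eq_mul] using (convexOn_yosida hRnonneg hVsym hVpsd hUsym hU hlam₀ v).2
      trivial trivial hθ₀ (sub_nonneg.2 hθ₁) (add_sub_cancel θ 1)

/-- Proposition 3.4: for `λ ≥ 1` and `U` symmetric
positive-definite, the Yosida-type regularization `p_V^{λ,U}` is a regularized
contact potential: continuous (and finite), positively one-homogeneous in `v`,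
convex in `w`, squeezed between `max{R(v),⟨w,v⟩}` and `p_V(v,w)`, and Lipschitz
in `w` with constant `L‖v‖`, `L = λ√(‖U‖_op‖U⁻¹‖_op)`. -/
theorem yosida_is_RCP {X : Type*} [NormedAddCommGroup X] [NormedSpace ℝ X]
    [FiniteDimensional ℝ X] (R : X → ℝ)
    (hRnonneg : ∀ v, 0 ≤ R v)
    (hRcoer : ∃ α > 0, ∀ v, α * ‖v‖ ≤ R v)
    (hRconv : ConvexOn ℝ Set.univ R)
    (hRhom : ∀ c : ℝ, 0 ≤ c → ∀ v, R (c • v) = c * R v)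
    (V : X →L[ℝ] X →L[ℝ] ℝ)
    (hVsym : ∀ x y, V x y = V y x)
    (hVpsd : ∀ x, 0 ≤ V x x)
    (U : X ≃L[ℝ] (X →L[ℝ] ℝ))
    (hUsym : ∀ x y, U x y = U y x)
    (hUpos : ∀ x : X, x ≠ 0 → 0 < U x x)
    (lam : ℝ) (hlam : 1 ≤ lam) :
    Continuous (fun q : X × (X →L[ℝ] ℝ) => yosida R V U lam q.1 q.2)
    ∧ (∀ c : ℝ, 0 ≤ c → ∀ (v : X) (w : X →L[ℝ] ℝ),
        yosida R V U lam (c • v) w = c * yosida R V U lam v w)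
    ∧ (∀ (v : X) (w₁ w₂ : X →L[ℝ] ℝ) (θ : ℝ), 0 ≤ θ → θ ≤ 1 →
        yosida R V U lam v (θ • w₁ + (1 - θ) • w₂) ≤
          θ * yosida R V U lam v w₁ + (1 - θ) * yosida R V U lam v w₂)
    ∧ (∀ (v : X) (w : X →L[ℝ] ℝ), max (R v) (w v) ≤ yosida R V U lam v w)
    ∧ (∀ (v : X) (w : X →L[ℝ] ℝ), ((yosida R V U lam v w : ℝ) : EReal) ≤ pV R V v w)
    ∧ (∀ (v : X) (w₁ w₂ : X →L[ℝ] ℝ),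
        |yosida R V U lam v w₁ - yosida R V U lam v w₂| ≤
          lam * Real.sqrt (‖U.toContinuousLinearMap‖ * ‖U.symm.toContinuousLinearMap‖)
            * ‖v‖ * ‖w₁ - w₂‖) :=
  yosida_is_RCP_general R hRnonneg hRconv hRhom V hVsym hVpsd U hUsym hUpos lam hlam
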